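/- For a natural number n ≥ 2, the real number ((√n)^(√n))^(√n) = n^(n/2) is rational if and only if n is even or n is a perfect square. -/

import Mathlib

open Real

theorem Real.rpow_sqrt_rpow_sqrt {x : ℝ} (hx : 0 ≤ x) :
    (√x ^ √x) ^ √x = √x ^ x := by
  rw [← rpow_mul (sqrt_nonneg x), mul_self_sqrt hx]

theorem Real.sqrt_natCast_pow_odd (n m : ℕ) :
    √(n : ℝ) ^ (2 * m + 1) = (n : ℝ) ^ m * √(n : ℝ) := by
  rw [pow_succ, pow_mul, sq_sqrt n.cast_nonneg]

theorem irrational_sqrt_natCast_pow_of_odd {n k : ℕ} (hk : Odd k) (hn : ¬IsSquare n) :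
    Irrational (√(n : ℝ) ^ k) := by
  obtain ⟨m, rfl⟩ := hk
  have hn0 : n ≠ 0 := by rintro rfl; exact hn ⟨0, rfl⟩
  rw [sqrt_natCast_pow_odd]
  simpa using (irrational_sqrt_natCast_iff.mpr hn).ratCast_mul
    (q := (n : ℚ) ^ m) (by positivity)

theorem sqrt_natCast_pow_eq_ratCast_of_even {n k : ℕ} (hk : Even k) :
    ∃ q : ℚ, √(n : ℝ) ^ k = q := by
  obtain ⟨m, rfl⟩ := hk
  refine ⟨(n : ℚ) ^ m, ?_⟩
  rw [← two_mul, pow_mul, sq_sqrt n.cast_nonneg]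
  push_cast
  rfl

theorem sqrt_natCast_pow_eq_ratCast_of_sq (k m : ℕ) :
    ∃ q : ℚ, √((k ^ 2 : ℕ) : ℝ) ^ m = q :=
  ⟨(k : ℚ) ^ m, by push_cast; rw [sqrt_sq k.cast_nonneg]⟩

theorem stmt4_general (n : ℕ) :
    (∃ q : ℚ, ((Real.sqrt n) ^ (Real.sqrt n : ℝ)) ^ (Real.sqrt n : ℝ) = (q : ℝ)) ↔
      Even n ∨ ∃ k : ℕ, n = k ^ 2 := by
  rw [rpow_sqrt_rpow_sqrt n.cast_nonneg, rpow_natCast]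
  constructor
  · rintro ⟨q, hq⟩
    by_contra! h
    obtain ⟨hodd, hsq⟩ := h
    have hsq' : ¬IsSquare n := by
      rintro ⟨k, rfl⟩
      exact hsq k (sq k).symm
    exact irrational_sqrt_natCast_pow_of_odd (Nat.not_even_iff_odd.mp hodd) hsq' ⟨q, hq.symm⟩
  · rintro (heven | ⟨k, rfl⟩)
    · exact sqrt_natCast_pow_eq_ratCast_of_even heven
    · exact sqrt_natCast_pow_eq_ratCast_of_sq k _

theorem stmt4 (n : ℕ) (hn : 2 ≤ n) :
    (∃ q : ℚ, ((Real.sqrt n) ^ (Real.sqrt n : ℝ)) ^ (Real.sqrt n : ℝ) = (q : ℝ)) ↔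
      Even n ∨ ∃ k : ℕ, n = k ^ 2 :=
  stmt4_general n
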